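/- Let Φ : A → B be a generalized channel with respect to J with minimal Kraus representation Φ(a) = Σ_{i,j} Σ_{k ∈ I(i,j)} V_k a V_k*, where the Kraus operators V_k : H_j → K_i are linearly independent within each block. Let {x₁,…,x_M} be a basis of J^⊥. Then Φ is an extreme point of C_J(A,B) if and only if the set ∪_{i,j}{V_k* V_l : k,l ∈ I(i,j)} ∪ {x₁,…,x_M} is linearly independent. -/

import Mathlib

open Matrix ComplexOrder

variable {n m : Type*} [Fintype n] [DecidableEq n] [Fintype m] [DecidableEq m]

/-- Partial trace over the first tensor factor `B` of `B ⊗ A`,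
realized on matrices indexed by products. -/
noncomputable def ptrace (X : Matrix (m × n) (m × n) ℂ) : Matrix n n ℂ :=
  Matrix.of fun a b => ∑ i, X (i, a) (i, b)

/-- The Choi matrix of a linear map `Φ : A → B` (on full matrix algebras). -/
noncomputable def choi (Φ : Matrix n n ℂ →ₗ[ℂ] Matrix m m ℂ) : Matrix (m × n) (m × n) ℂ :=
  Matrix.of fun p q => Φ (Matrix.single p.2 q.2 1) p.1 q.1

/-- Hilbert–Schmidt orthogonal complement of a subspace. -/
noncomputable def hsPerp {k : Type*} [Fintype k] (J : Submodule ℂ (Matrix k k ℂ)) :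
    Submodule ℂ (Matrix k k ℂ) where
  carrier := {x | ∀ a ∈ J, Matrix.trace (aᴴ * x) = 0}
  add_mem' := by
    intro x y hx hy a ha
    simp [Matrix.mul_add, hx a ha, hy a ha]
  zero_mem' := by intro a ha; simp
  smul_mem' := by
    intro c x hx a ha
    simp [Matrix.mul_smul, hx a ha]

/-- Hilbert–Schmidt orthogonal complement of the transpose `J^T` of a subspace `J`. -/
def hsPerpT {k : Type*} [Fintype k] (J : Submodule ℂ (Matrix k k ℂ)) : Set (Matrix k k ℂ) :=
  {x | ∀ a ∈ J, Matrix.trace (aᵀᴴ * x) = 0}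

/-- A subspace is positively generated if it is spanned by its positive elements. -/
def PositivelyGenerated {k : Type*} [Fintype k] (J : Submodule ℂ (Matrix k k ℂ)) : Prop :=
  J = Submodule.span ℂ {a : Matrix k k ℂ | a ∈ J ∧ a.PosSemidef}

/-- `P` is the support projection of `X`: a Hermitian idempotent with the same range. -/
def IsSupportProj {k : Type*} [Fintype k] [DecidableEq k] (X P : Matrix k k ℂ) : Prop :=
  P.IsHermitian ∧ P * P = P ∧
    LinearMap.range (Matrix.toLin' P) = LinearMap.range (Matrix.toLin' X)

/-!
Let `W` be the matrix whose columns are the vectorised Kraus operators. The map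
`a ↦ ∑ cₖₗ Vₖ a Vₗᴴ` has Choi matrix `W c Wᴴ`, so `choi Φ = W Wᴴ`, and independence of the `Vₖ`
makes `c` unique. If `Φ` lies inside a segment of generalized channels, positivity forces the Choi
matrix of an endpoint `Ψ` to vanish on `ker Wᴴ`, so `Ψ - Φ` is such a map; it kills traces on `J`
exactly when `∑ cₗₖ Vₖᴴ Vₗ ∈ J^⊥`. Conversely, a nonzero `c` with this property can be taken
Hermitian (`J`, being positively generated, is closed under adjoints, hence so is `J^⊥`), and then
`Φ ± ε (a ↦ ∑ cₗₖ Vₖ a Vₗᴴ)` are generalized channels for small `ε > 0`. Hence `Φ` is extreme iff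
`c ↦ ∑ cₖₗ Vₖᴴ Vₗ` is injective modulo `J^⊥ = span {xᵢ}`, i.e. iff the combined family is
linearly independent.
-/

section LinearAlgebra

variable {R E ι κ : Type*} [Ring R] [AddCommGroup E] [Module R E] [Fintype ι] [Fintype κ]

theorem linearIndependent_sum_elim_iff_of_linearIndependent {f : ι → E} {x : κ → E}
    (hx : LinearIndependent R x) :
    LinearIndependent R (Sum.elim f x) ↔
      ∀ c : ι → R, ∑ i, c i • f i ∈ Submodule.span R (Set.range x) → c = 0 := by
  simp only [Fintype.linearIndependent_iff, Fintype.sum_sum_type, Sum.elim_inl, Sum.elim_inr]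
  constructor
  · intro h c hc
    obtain ⟨b, hb⟩ := (Submodule.mem_span_range_iff_exists_fun R).mp hc
    funext i
    refine h (Sum.elim c (-b)) ?_ (Sum.inl i)
    simp [hb]
  · intro h g hg
    have hl : ∀ i, g (Sum.inl i) = 0 := congrFun <| h _ <| by
      rw [eq_neg_of_add_eq_zero_left hg]
      exact neg_mem <| Submodule.sum_mem _ fun j _ =>
        Submodule.smul_mem _ _ (Submodule.subset_span ⟨j, rfl⟩)
    have hr := Fintype.linearIndependent_iff.mp hx (fun j => g (Sum.inr j)) (by simpa [hl] using hg)
    rintro (i | j)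
    · exact hl i
    · exact hr j

end LinearAlgebra

theorem Submodule.exists_isSelfAdjoint_ne_zero_mem {A : Type*} [AddCommGroup A] [Module ℂ A]
    [StarAddMonoid A] [StarModule ℂ A] {S : Submodule ℂ A} (hS : ∀ c ∈ S, star c ∈ S)
    (h : S ≠ ⊥) : ∃ d ∈ S, IsSelfAdjoint d ∧ d ≠ 0 := by
  obtain ⟨c, hcS, hc0⟩ := Submodule.exists_mem_ne_zero_of_ne_bot h
  by_cases hskew : c + star c = 0
  · -- `c` is skew-adjoint, so `I • c` is self-adjoint
    refine ⟨Complex.I • c, S.smul_mem _ hcS, ?_, smul_ne_zero Complex.I_ne_zero hc0⟩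
    rw [IsSelfAdjoint, star_smul, eq_neg_of_add_eq_zero_right hskew]
    simp [Complex.conj_I]
  · exact ⟨c + star c, S.add_mem hcS (hS c hcS), .add_star_self c, hskew⟩

theorem eq_zero_of_mem_extremePoints_of_add_mem_of_sub_mem {𝕜 E : Type*} [Field 𝕜]
    [LinearOrder 𝕜] [IsStrictOrderedRing 𝕜] [AddCommGroup E] [Module 𝕜 E] {A : Set E} {x y : E}
    (hx : x ∈ A.extremePoints 𝕜) (hadd : x + y ∈ A) (hsub : x - y ∈ A) : y = 0 := by
  have hseg : x ∈ openSegment 𝕜 (x + y) (x - y) :=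
    ⟨1 / 2, 1 / 2, by norm_num, by norm_num, by norm_num, by module⟩
  simpa using (mem_extremePoints_iff_left.mp hx).2 _ hadd _ hsub hseg

namespace Matrix

variable {𝕜 ι α : Type*} [RCLike 𝕜] [Fintype ι] [Fintype α]

theorem PosSemidef.mulVec_eq_zero_of_add {A B : Matrix ι ι 𝕜} (hA : A.PosSemidef)
    (hB : B.PosSemidef) {v : ι → 𝕜} (h : (A + B) *ᵥ v = 0) : A *ᵥ v = 0 := by
  have hsum : star v ⬝ᵥ A *ᵥ v + star v ⬝ᵥ B *ᵥ v = 0 := by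
    rw [← dotProduct_add, ← add_mulVec, h, dotProduct_zero]
  rw [← hA.dotProduct_mulVec_zero_iff]
  exact ((add_eq_zero_iff_of_nonneg (hA.dotProduct_mulVec_nonneg v)
    (hB.dotProduct_mulVec_nonneg v)).mp hsum).1

theorem IsHermitian.posSemidef_one_add_smul [DecidableEq ι] {d : Matrix ι ι 𝕜}
    (hd : d.IsHermitian) {t : ℝ} (ht : ∀ i, 0 ≤ 1 + t * hd.eigenvalues i) : (1 + (t : 𝕜) • d).PosSemidef := by
  set U := hd.eigenvectorUnitary
  have hdiag : (1 : Matrix ι ι 𝕜) + (t : 𝕜) • diagonal (RCLike.ofReal ∘ hd.eigenvalues) =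
      diagonal fun i => ((1 + t * hd.eigenvalues i : ℝ) : 𝕜) := by
    ext i j
    rcases eq_or_ne i j with rfl | hij
    · simp
    · simp [hij]
  have hconj : 1 + (t : 𝕜) • d =
      Unitary.conjStarAlgAut 𝕜 _ U (diagonal fun i => ((1 + t * hd.eigenvalues i : ℝ) : 𝕜)) := by
    rw [← hdiag, map_add, map_one, map_smul, ← hd.spectral_theorem]
  rw [hconj, Unitary.conjStarAlgAut_apply, star_eq_conjTranspose]
  exact (posSemidef_diagonal_iff.mpr fun i => RCLike.ofReal_nonneg.mpr (ht i))
    |>.mul_mul_conjTranspose_same _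

theorem IsHermitian.exists_posSemidef_one_add_smul_and_one_sub_smul [DecidableEq ι]
    {d : Matrix ι ι 𝕜} (hd : d.IsHermitian) :
    ∃ ε : ℝ, 0 < ε ∧ (1 + (ε : 𝕜) • d).PosSemidef ∧ (1 - (ε : 𝕜) • d).PosSemidef := by
  set ε := (1 + ∑ i, |hd.eigenvalues i|)⁻¹
  have hε : 0 < ε := by positivity
  have hbound : ∀ i, |ε * hd.eigenvalues i| ≤ 1 := fun i => by
    rw [abs_mul, abs_of_pos hε, inv_mul_le_one₀ (by positivity)]
    linarith [Finset.single_le_sum (fun j _ => abs_nonneg (hd.eigenvalues j)) (Finset.mem_univ i)]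
  refine ⟨ε, hε, hd.posSemidef_one_add_smul fun i => ?_, ?_⟩
  · linarith [(abs_le.mp (hbound i)).1]
  · have := hd.posSemidef_one_add_smul (t := -ε) fun i => by
      linarith [(abs_le.mp (hbound i)).2, neg_mul ε (hd.eigenvalues i)]
    simpa [sub_eq_add_neg] using this

theorem exists_mul_eq_one_of_mulVec_injective [DecidableEq ι] {W : Matrix α ι 𝕜}
    (hW : Function.Injective W.mulVec) : ∃ L : Matrix ι α 𝕜, L * W = 1 := by
  have hG : IsUnit (Wᴴ * W).det :=
    (isUnit_iff_isUnit_det _).mp (PosDef.conjTranspose_mul_self W hW).isUnit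
  exact ⟨(Wᴴ * W)⁻¹ * Wᴴ, by rw [Matrix.mul_assoc, nonsing_inv_mul _ hG]⟩

theorem eq_zero_of_mul_mul_conjTranspose_eq_zero [DecidableEq ι] {W : Matrix α ι 𝕜}
    (hW : Function.Injective W.mulVec) {c : Matrix ι ι 𝕜} (h : W * c * Wᴴ = 0) : c = 0 := by
  obtain ⟨L, hL⟩ := exists_mul_eq_one_of_mulVec_injective hW
  calc c = L * W * c * (L * W)ᴴ := by rw [hL, conjTranspose_one, Matrix.one_mul, Matrix.mul_one]
    _ = L * (W * c * Wᴴ) * Lᴴ := by simp only [conjTranspose_mul, Matrix.mul_assoc]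
    _ = 0 := by rw [h, Matrix.mul_zero, Matrix.zero_mul]

theorem IsHermitian.exists_eq_mul_mul_conjTranspose [DecidableEq ι] {W : Matrix α ι 𝕜}
    (hW : Function.Injective W.mulVec) {H : Matrix α α 𝕜} (hH : H.IsHermitian)
    (hker : ∀ v, Wᴴ *ᵥ v = 0 → H *ᵥ v = 0) : ∃ c : Matrix ι ι 𝕜, H = W * c * Wᴴ := by
  obtain ⟨L, hL⟩ := exists_mul_eq_one_of_mulVec_injective hW
  have hright : H * (Lᴴ * Wᴴ) = H := ext_iff_mulVec.mpr fun v => by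
    have hv : Wᴴ *ᵥ (v - (Lᴴ * Wᴴ) *ᵥ v) = 0 := by
      rw [mulVec_sub, mulVec_mulVec, ← Matrix.mul_assoc, ← conjTranspose_mul, hL,
        conjTranspose_one, Matrix.one_mul, sub_self]
    have hHv := hker _ hv
    rwa [mulVec_sub, sub_eq_zero, mulVec_mulVec, eq_comm] at hHv
  have hleft : W * L * H = H := by
    simpa only [conjTranspose_mul, conjTranspose_conjTranspose, hH.eq, Matrix.mul_assoc]
      using congrArg (·ᴴ) hright
  refine ⟨L * H * Lᴴ, ?_⟩
  calc H = W * L * (H * (Lᴴ * Wᴴ)) := by rw [hright, hleft]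
    _ = W * (L * H * Lᴴ) * Wᴴ := by simp only [Matrix.mul_assoc]

end Matrix

section HilbertSchmidt

variable {ι : Type*} [Fintype ι] {J : Submodule ℂ (Matrix ι ι ℂ)}

theorem PositivelyGenerated.conjTranspose_mem (hJ : PositivelyGenerated J) {a : Matrix ι ι ℂ}
    (ha : a ∈ J) : aᴴ ∈ J := by
  rw [hJ] at ha ⊢
  induction ha using Submodule.span_induction with
  | mem b hb => rw [hb.2.isHermitian.eq]; exact Submodule.subset_span hb
  | zero => simp
  | add b c _ _ hb hc => simpa only [conjTranspose_add] using Submodule.add_mem _ hb hc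
  | smul z b _ hb => simpa only [conjTranspose_smul] using Submodule.smul_mem _ _ hb

theorem mem_hsPerp_iff_trace_mul (hJ : PositivelyGenerated J) {Y : Matrix ι ι ℂ} :
    Y ∈ hsPerp J ↔ ∀ a ∈ J, trace (Y * a) = 0 := by
  refine ⟨fun h a ha => ?_, fun h a ha => ?_⟩
  · simpa [trace_mul_comm Y] using h aᴴ (hJ.conjTranspose_mem ha)
  · simpa [trace_mul_comm Y] using h aᴴ (hJ.conjTranspose_mem ha)

theorem conjTranspose_mem_hsPerp (hJ : PositivelyGenerated J) {Y : Matrix ι ι ℂ}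
    (hY : Y ∈ hsPerp J) : Yᴴ ∈ hsPerp J := fun a ha => by
  rw [← conjTranspose_mul, trace_conjTranspose, (mem_hsPerp_iff_trace_mul hJ).mp hY a ha,
    star_zero]

end HilbertSchmidt

section Choi

variable {H K : Type*} [DecidableEq H]

theorem choi_add (Ψ Ψ' : Matrix H H ℂ →ₗ[ℂ] Matrix K K ℂ) :
    choi (Ψ + Ψ') = choi Ψ + choi Ψ' := by
  ext; simp [choi]

theorem choi_sub (Ψ Ψ' : Matrix H H ℂ →ₗ[ℂ] Matrix K K ℂ) :
    choi (Ψ - Ψ') = choi Ψ - choi Ψ' := by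
  ext; simp [choi]

theorem choi_smul (r : ℝ) (Ψ : Matrix H H ℂ →ₗ[ℂ] Matrix K K ℂ) :
    choi (r • Ψ) = r • choi Ψ := by
  ext; simp [choi]

theorem choi_injective [Fintype H] :
    Function.Injective (choi : (Matrix H H ℂ →ₗ[ℂ] Matrix K K ℂ) → _) :=
  fun _ _ h => Matrix.ext_linearMap ℂ fun i j => LinearMap.ext_ring <| by
    ext p q
    exact congrFun (congrFun h (p, i)) (q, j)

end Choi

section Kraus

variable {H K κ : Type*} [Fintype κ] (V : κ → Matrix K H ℂ)

noncomputable def krausMap [Fintype H] [DecidableEq κ] :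
    Matrix κ κ ℂ →ₗ[ℂ] Matrix H H ℂ →ₗ[ℂ] Matrix K K ℂ :=
  liftLinear ℂ fun k l => LinearMap.toSpanSingleton ℂ _
    (mulLeftLinearMap K ℂ (V k) ∘ₗ mulRightLinearMap H ℂ (V l)ᴴ)

noncomputable def krausGram [Fintype K] [DecidableEq κ] : Matrix κ κ ℂ →ₗ[ℂ] Matrix H H ℂ :=
  liftLinear ℂ fun k l => LinearMap.toSpanSingleton ℂ _ ((V k)ᴴ * V l)

def krausVec : Matrix (K × H) κ ℂ :=
  Matrix.of fun p k => V k p.1 p.2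

theorem krausMap_apply [Fintype H] [DecidableEq κ] (c : Matrix κ κ ℂ) (a : Matrix H H ℂ) :
    krausMap V c a = ∑ k, ∑ l, c k l • (V k * a * (V l)ᴴ) := by
  simp [krausMap, liftLinear_apply, Matrix.mul_assoc]

theorem krausGram_apply [Fintype K] [DecidableEq κ] (c : Matrix κ κ ℂ) :
    krausGram V c = ∑ k, ∑ l, c k l • ((V k)ᴴ * V l) := by
  simp [krausGram, liftLinear_apply]

theorem krausMap_one_apply [Fintype H] [DecidableEq κ] (a : Matrix H H ℂ) :
    krausMap V 1 a = ∑ k, V k * a * (V k)ᴴ := by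
  simp [krausMap_apply, one_apply]

theorem choi_krausMap [Fintype H] [DecidableEq H] [DecidableEq κ] (c : Matrix κ κ ℂ) :
    choi (krausMap V c) = krausVec V * c * (krausVec V)ᴴ := by
  ext ⟨i, a⟩ ⟨j, b⟩
  have hentry : ∀ k l, (V k * single a b (1 : ℂ) * (V l)ᴴ) i j = V k i a * star (V l j b) := by
    intro k l
    rw [mul_apply, Finset.sum_eq_single b
      (fun t _ ht => by rw [mul_single_apply_of_ne _ _ _ _ _ ht, zero_mul]) (by simp)]
    simp
  simp only [choi, of_apply, krausMap_apply, Matrix.sum_apply, Matrix.smul_apply, smul_eq_mul,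
    hentry]
  simp only [krausVec, mul_apply, of_apply, conjTranspose_apply, Finset.sum_mul]
  rw [Finset.sum_comm]
  exact Finset.sum_congr rfl fun _ _ => Finset.sum_congr rfl fun _ _ => by ring

theorem trace_krausMap [Fintype H] [Fintype K] [DecidableEq κ] (c : Matrix κ κ ℂ)
    (a : Matrix H H ℂ) :
    trace (krausMap V c a) = trace (krausGram V cᵀ * a) := by
  simp only [krausMap_apply, krausGram_apply, Finset.sum_mul, smul_mul, trace_sum, trace_smul,
    transpose_apply, smul_eq_mul]
  rw [Finset.sum_comm]
  simp only [trace_mul_cycle (V _)]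

theorem krausGram_conjTranspose [Fintype K] [DecidableEq κ] (c : Matrix κ κ ℂ) :
    (krausGram V c)ᴴ = krausGram V cᴴ := by
  simp only [krausGram_apply, conjTranspose_sum, conjTranspose_smul, conjTranspose_mul,
    conjTranspose_conjTranspose, conjTranspose_apply]
  exact Finset.sum_comm

variable {V}

theorem mulVec_krausVec_injective (hV : LinearIndependent ℂ V) :
    Function.Injective (krausVec V).mulVec :=
  mulVec_injective_iff.mpr <|
    hV.map' ((LinearEquiv.curry ℂ ℂ K H).symm.toLinearMap ∘ₗ (ofLinearEquiv ℂ).symm.toLinearMap)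
      (by simp)

theorem krausGram_transpose_mem_hsPerp_iff [Fintype H] [Fintype K] [DecidableEq κ]
    {J : Submodule ℂ (Matrix H H ℂ)} (hJ : PositivelyGenerated J) (c : Matrix κ κ ℂ) :
    krausGram V cᵀ ∈ hsPerp J ↔ ∀ a ∈ J, trace (krausMap V c a) = 0 := by
  simp only [mem_hsPerp_iff_trace_mul hJ, trace_krausMap]

end Kraus

section Extreme

variable {H K κ : Type*} [Fintype H] [DecidableEq H] [Fintype K] [Fintype κ] [DecidableEq κ]
  {J : Submodule ℂ (Matrix H H ℂ)} {V : κ → Matrix K H ℂ}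

/-- The convex set `C_J(A, B)` of generalized channels with respect to `J`. -/
def generalizedChannels (J : Submodule ℂ (Matrix H H ℂ)) :
    Set (Matrix H H ℂ →ₗ[ℂ] Matrix K K ℂ) :=
  {Ψ | (choi Ψ).PosSemidef ∧ ∀ a ∈ J, trace (Ψ a) = trace a}

theorem krausMap_one_mem_extremePoints (hJ : PositivelyGenerated J) (hV : LinearIndependent ℂ V)
    (hΦ : krausMap V 1 ∈ generalizedChannels J)
    (hgram : ∀ c, krausGram V c ∈ hsPerp J → c = 0) :
    krausMap V 1 ∈ (generalizedChannels J).extremePoints ℝ := by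
  refine mem_extremePoints_iff_left.mpr ⟨hΦ, fun Ψ hΨ Ψ' hΨ' ⟨s, t, hs, ht, _, hst⟩ => ?_⟩
  set W := krausVec V
  have hchoiΦ : choi (krausMap V 1) = W * Wᴴ := by rw [choi_krausMap, Matrix.mul_one]
  -- `choi Φ = s • choi Ψ + t • choi Ψ'` is a sum of positive matrices, so its kernel lies in
  -- that of `choi Ψ`
  have hker : ∀ v, Wᴴ *ᵥ v = 0 → (choi Ψ - choi (krausMap V 1)) *ᵥ v = 0 := by
    intro v hv
    have hΦv : choi (krausMap V 1) *ᵥ v = 0 := by rw [hchoiΦ, ← mulVec_mulVec, hv, mulVec_zero]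
    have hΨv : (s • choi Ψ) *ᵥ v = 0 := (hΨ.1.smul hs.le).mulVec_eq_zero_of_add (hΨ'.1.smul ht.le)
      (by rwa [← choi_smul, ← choi_smul, ← choi_add, hst])
    rw [smul_mulVec, smul_eq_zero] at hΨv
    rw [sub_mulVec, hΨv.resolve_left hs.ne', hΦv, sub_zero]
  obtain ⟨c, hc⟩ := (hΨ.1.1.sub hΦ.1.1).exists_eq_mul_mul_conjTranspose
    (mulVec_krausVec_injective hV) hker
  have hΨc : Ψ - krausMap V 1 = krausMap V c :=
    choi_injective (by rw [choi_sub, hc, choi_krausMap])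
  have htr : ∀ a ∈ J, trace (krausMap V c a) = 0 := fun a ha => by
    rw [← hΨc, LinearMap.sub_apply, trace_sub, hΨ.2 a ha, hΦ.2 a ha, sub_self]
  have hc0 : c = 0 := transpose_eq_zero.mp <| hgram _ <|
    (krausGram_transpose_mem_hsPerp_iff hJ c).mpr htr
  rwa [hc0, map_zero, sub_eq_zero] at hΨc

theorem krausMap_injective (hV : LinearIndependent ℂ V) : Function.Injective (krausMap V) :=
  (injective_iff_map_eq_zero _).mpr fun c hc => eq_zero_of_mul_mul_conjTranspose_eq_zero
    (mulVec_krausVec_injective hV) (by rw [← choi_krausMap, hc]; ext; simp [choi])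

theorem add_krausMap_mem_generalizedChannels (hΦ : krausMap V 1 ∈ generalizedChannels J)
    {e : Matrix κ κ ℂ} (he : (1 + e).PosSemidef) (htr : ∀ a ∈ J, trace (krausMap V e a) = 0) :
    krausMap V 1 + krausMap V e ∈ generalizedChannels J := by
  refine ⟨by rw [← map_add, choi_krausMap]; exact he.mul_mul_conjTranspose_same _, fun a ha => ?_⟩
  rw [LinearMap.add_apply, trace_add, hΦ.2 a ha, htr a ha, add_zero]

theorem eq_zero_of_krausGram_mem_hsPerp (hJ : PositivelyGenerated J)
    (hV : LinearIndependent ℂ V) (hext : krausMap V 1 ∈ (generalizedChannels J).extremePoints ℝ)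
    {c : Matrix κ κ ℂ} (hc : krausGram V c ∈ hsPerp J) : c = 0 := by
  by_contra hc0
  obtain ⟨d, hdmem, hd, hd0⟩ := Submodule.exists_isSelfAdjoint_ne_zero_mem
    (S := (hsPerp J).comap (krausGram V))
    (fun e he => by
      simpa only [Submodule.mem_comap, star_eq_conjTranspose, ← krausGram_conjTranspose]
        using conjTranspose_mem_hsPerp hJ he)
    ((Submodule.ne_bot_iff _).mpr ⟨c, hc, hc0⟩)
  obtain ⟨ε, hε, hplus, hminus⟩ :=
    (isHermitian_iff_isSelfAdjoint.mpr hd).transpose.exists_posSemidef_one_add_smul_and_one_sub_smul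
  have htr : ∀ a ∈ J, trace (krausMap V ((ε : ℂ) • dᵀ) a) = 0 := by
    rw [← krausGram_transpose_mem_hsPerp_iff hJ, transpose_smul, transpose_transpose, map_smul]
    exact Submodule.smul_mem _ _ hdmem
  have hD0 : krausMap V ((ε : ℂ) • dᵀ) = 0 := by
    refine eq_zero_of_mem_extremePoints_of_add_mem_of_sub_mem hext
      (add_krausMap_mem_generalizedChannels hext.1 hplus htr) ?_
    rw [sub_eq_add_neg, ← map_neg]
    refine add_krausMap_mem_generalizedChannels hext.1 (by rwa [← sub_eq_add_neg]) fun a ha => ?_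
    rw [map_neg, LinearMap.neg_apply, trace_neg, htr a ha, neg_zero]
  rw [map_eq_zero_iff _ (krausMap_injective hV), smul_eq_zero, transpose_eq_zero] at hD0
  exact hd0 (hD0.resolve_left (by exact_mod_cast hε.ne'))

theorem krausMap_one_mem_extremePoints_iff (hJ : PositivelyGenerated J)
    (hV : LinearIndependent ℂ V) (hΦ : krausMap V 1 ∈ generalizedChannels J) :
    krausMap V 1 ∈ (generalizedChannels J).extremePoints ℝ ↔
      ∀ c, krausGram V c ∈ hsPerp J → c = 0 :=
  ⟨fun hext _ => eq_zero_of_krausGram_mem_hsPerp hJ hV hext,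
    krausMap_one_mem_extremePoints hJ hV hΦ⟩

end Extreme

/-- given a minimal Kraus representation `Φ(a) = Σ_k V_k a V_k*` of a
generalized channel `Φ` w.r.t. `J`, and a basis `x₁,…,x_M` of `J^⊥`, `Φ` is an extreme
point of `C_J(A,B)` iff `{V_k* V_l} ∪ {x₁,…,x_M}` is linearly independent. -/
theorem extreme_iff_kraus_linearIndependent
    (J : Submodule ℂ (Matrix n n ℂ)) (hJ : PositivelyGenerated J)
    {N M : ℕ} (V : Fin N → Matrix m n ℂ) (hV : LinearIndependent ℂ V)
    (x : Fin M → Matrix n n ℂ)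
    (hxind : LinearIndependent ℂ x)
    (hxspan : Submodule.span ℂ (Set.range x) = hsPerp J)
    (Φ : Matrix n n ℂ →ₗ[ℂ] Matrix m m ℂ)
    (hΦ : ∀ a : Matrix n n ℂ, Φ a = ∑ k, V k * a * (V k)ᴴ)
    (hΦtp : ∀ a ∈ J, Matrix.trace (Φ a) = Matrix.trace a) :
    Φ ∈ Set.extremePoints ℝ
        {Ψ : Matrix n n ℂ →ₗ[ℂ] Matrix m m ℂ |
          (choi Ψ).PosSemidef ∧ ∀ a ∈ J, Matrix.trace (Ψ a) = Matrix.trace a} ↔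
      LinearIndependent ℂ
        (Sum.elim (fun kl : Fin N × Fin N => (V kl.1)ᴴ * V kl.2) x) := by
  obtain rfl : Φ = krausMap V 1 := LinearMap.ext fun a => by rw [hΦ, krausMap_one_apply]
  have hmem : krausMap V 1 ∈ generalizedChannels J :=
    ⟨by rw [choi_krausMap, Matrix.mul_one]; exact posSemidef_self_mul_conjTranspose _, hΦtp⟩
  rw [linearIndependent_sum_elim_iff_of_linearIndependent hxind, hxspan]
  refine (krausMap_one_mem_extremePoints_iff hJ hV hmem).trans ⟨fun h c hc => ?_, fun h c hc => ?_⟩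
  · funext ⟨k, l⟩
    refine congrFun (congrFun (h (Matrix.of fun k l => c (k, l)) ?_) k) l
    rwa [krausGram_apply, ← Fintype.sum_prod_type']
  · ext k l
    refine congrFun (h (fun p => c p.1 p.2) ?_) (k, l)
    rwa [krausGram_apply, ← Fintype.sum_prod_type'] at hc
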